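/- arXiv:2101.11992 — 2 statements merged into one kernel-verified Lean document; each statement's English description precedes it below -/
import Mathlib

section
/- Let p ∈ [1/2, 1], γ ∈ [0, 1), m a natural number, and let M be the 2×2 real matrix M = [[1−p, p],[p, 1−p]]. For every stationary deterministic policy π : {0,1} → {0,1} and every state sequence s : ℕ → {0,1}, the discounted delayed return Σ_{t=0}^∞ γ^t · (M^m)(s_t, π(s_t)) is at most (1 + (2p−1)^m) / (2(1−γ)). Moreover, for the policy π* defined by π*(i) = i if m is even and π*(i) = 1−i if m is odd, the return Σ_{t=0}^∞ γ^t · (M^m)(s_t, π*(s_t)) equals (1 + (2p−1)^m) / (2(1−γ)) for every state sequence s. -/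
/-!
The matrix `!![1 - p, p; p, 1 - p]` has eigenvalues `1` and `1 - 2p`, so its `m`-th power has
diagonal entries `(1 + (1 - 2p)^m) / 2` and off-diagonal entries `(1 - (1 - 2p)^m) / 2`. For
`p ≥ 1/2` the larger of the two is `(1 + (2p - 1)^m) / 2`: it sits on the diagonal for even `m`
and off it for odd `m`, which is where `π*` picks its action. Summing the discounted bound over
time gives `(1 + (2p - 1)^m) / (2(1 - γ))`.
-/

open Matrix

theorem pow_two_state_matrix {K : Type*} [Field K] [NeZero (2 : K)] (p : K) (m : ℕ) :
    !![1 - p, p; p, 1 - p] ^ m =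
      !![(1 + (1 - 2 * p) ^ m) / 2, (1 - (1 - 2 * p) ^ m) / 2;
         (1 - (1 - 2 * p) ^ m) / 2, (1 + (1 - 2 * p) ^ m) / 2] := by
  induction m with
  | zero =>
    have h : (1 + 1) / 2 = (1 : K) := by rw [one_add_one_eq_two, div_self two_ne_zero]
    simp [one_fin_two, h]
  | succ n ih =>
    rw [pow_succ, ih]
    ext i j
    fin_cases i <;> fin_cases j <;> simp [mul_apply, Fin.sum_univ_two, pow_succ] <;> ring

theorem pow_two_state_matrix_apply_le {p : ℝ} (hp₀ : 0 ≤ p) (hp₁ : p ≤ 1) (m : ℕ) (i j : Fin 2) :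
    0 ≤ (!![1 - p, p; p, 1 - p] ^ m) i j ∧
      (!![1 - p, p; p, 1 - p] ^ m) i j ≤ (1 + |1 - 2 * p| ^ m) / 2 := by
  have hx : |(1 - 2 * p) ^ m| ≤ 1 := by
    rw [abs_pow]; exact pow_le_one₀ (abs_nonneg _) (abs_le.2 ⟨by linarith, by linarith⟩)
  have hx' := abs_le.1 hx
  have hle := le_abs_self ((1 - 2 * p) ^ m)
  have hge := neg_abs_le ((1 - 2 * p) ^ m)
  rw [pow_two_state_matrix, ← abs_pow]
  fin_cases i <;> fin_cases j <;> simp only [of_apply, cons_val', cons_val_zero, cons_val_one,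
    empty_val', cons_val_fin_one, Fin.zero_eta, Fin.mk_one] <;> constructor <;> linarith

theorem pow_two_state_matrix_apply_optimal (p : ℝ) (m : ℕ) (i : Fin 2) :
    (!![1 - p, p; p, 1 - p] ^ m) i ((if Even m then id else fun i : Fin 2 => 1 - i) i) =
      (1 + (2 * p - 1) ^ m) / 2 := by
  rw [pow_two_state_matrix, show 1 - 2 * p = -(2 * p - 1) by ring]
  rcases Nat.even_or_odd m with hm | hm
  · rw [if_pos hm, hm.neg_pow]
    fin_cases i <;> rfl
  · rw [if_neg (Nat.not_even_iff_odd.2 hm), hm.neg_pow, sub_neg_eq_add]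
    fin_cases i <;> rfl

theorem tsum_geometric_mul_le {γ c : ℝ} {f : ℕ → ℝ} (hγ₀ : 0 ≤ γ) (hγ₁ : γ < 1)
    (hf₀ : ∀ t, 0 ≤ f t) (hfc : ∀ t, f t ≤ c) :
    ∑' t, γ ^ t * f t ≤ c / (1 - γ) := by
  have hle : ∀ t, γ ^ t * f t ≤ γ ^ t * c := fun t =>
    mul_le_mul_of_nonneg_left (hfc t) (pow_nonneg hγ₀ t)
  have hc : Summable fun t => γ ^ t * c := (summable_geometric_of_lt_one hγ₀ hγ₁).mul_right c
  calc ∑' t, γ ^ t * f t ≤ ∑' t, γ ^ t * c :=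
        (hc.of_nonneg_of_le (fun t => mul_nonneg (pow_nonneg hγ₀ t) (hf₀ t)) hle).tsum_le_tsum hle hc
    _ = c / (1 - γ) := by
        rw [tsum_mul_right, tsum_geometric_of_lt_one hγ₀ hγ₁, inv_mul_eq_div]

/-- In the two-state MDP with execution delay `m` (Example 1), for any stationary
deterministic policy `π : Fin 2 → Fin 2` and any state sequence `s`, the discounted
delayed return `∑ₜ γ^t (M^m)(s_t, π(s_t))` is at most `(1 + (2p-1)^m)/(2(1-γ))`,
and the policy `π*` (identity for even `m`, flip for odd `m`) attains this value. -/
theorem two_state_delayed_optimal_return (p γ : ℝ) (hp₁ : 1 / 2 ≤ p) (hp₂ : p ≤ 1)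
    (hγ₀ : 0 ≤ γ) (hγ₁ : γ < 1) (m : ℕ)
    (M : Matrix (Fin 2) (Fin 2) ℝ) (hM : M = !![1 - p, p; p, 1 - p]) :
    (∀ (π : Fin 2 → Fin 2) (s : ℕ → Fin 2),
      (∑' t : ℕ, γ ^ t * (M ^ m) (s t) (π (s t))) ≤ (1 + (2 * p - 1) ^ m) / (2 * (1 - γ))) ∧
    (∀ s : ℕ → Fin 2,
      (∑' t : ℕ, γ ^ t * (M ^ m) (s t) ((if Even m then id else fun i : Fin 2 => 1 - i) (s t)))
        = (1 + (2 * p - 1) ^ m) / (2 * (1 - γ))) := by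
  subst hM
  have hp₀ : 0 ≤ p := by linarith
  have habs : |1 - 2 * p| = 2 * p - 1 := by rw [abs_of_nonpos (by linarith)]; ring
  rw [← div_div]
  refine ⟨fun π s => ?_, fun s => ?_⟩
  · rw [← habs]
    exact tsum_geometric_mul_le hγ₀ hγ₁
      (fun t => (pow_two_state_matrix_apply_le hp₀ hp₂ m _ _).1)
      (fun t => (pow_two_state_matrix_apply_le hp₀ hp₂ m _ _).2)
  · simp_rw [pow_two_state_matrix_apply_optimal]
    rw [tsum_mul_right, tsum_geometric_of_lt_one hγ₀ hγ₁, inv_mul_eq_div]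
end

section
/- In the chain MDP with parameters n ∈ ℕ and γ ∈ (0,1), for every t with 0 ≤ t ≤ n, let π_t be the policy that plays u exactly on the states s_i with n+1−t ≤ i ≤ n (and d on all other non-absorbing states). Then the value of π_t satisfies v^{π_t}(s_i) = γ^{n−i} for n+1−t ≤ i ≤ n, and v^{π_t}(s) = 0 for all other states s (including the absorbing state s_{n+1}). -/
/-- States of the chain MDP with parameters `n`: `s_0, …, s_{n+1}`, where `s_{n+1}`
is absorbing. Actions: `true = u`, `false = d`. -/
def chainStep (n : ℕ) (s : Fin (n + 2)) (a : Bool) : Fin (n + 2) :=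
  if a then (if h : s.val < n then ⟨s.val + 1, by omega⟩ else s) else ⟨n + 1, by omega⟩

/-- Reward of the chain MDP: `r(s_n, u) = 1 - γ` and `0` otherwise. -/
def chainReward (n : ℕ) (γ : ℝ) (s : Fin (n + 2)) (a : Bool) : ℝ :=
  if s.val = n ∧ a = true then 1 - γ else 0

/-- Deterministic trajectory of a policy `π` from state `s`. -/
def chainTraj (n : ℕ) (π : Fin (n + 2) → Bool) (s : Fin (n + 2)) : ℕ → Fin (n + 2)
  | 0 => s
  | t + 1 => chainStep n (chainTraj n π s t) (π (chainTraj n π s t))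

/-- Value `v^π(s) = ∑ₜ γ^t r(x_t, π(x_t))` of a policy `π` in the chain MDP. -/
noncomputable def chainValue (n : ℕ) (γ : ℝ) (π : Fin (n + 2) → Bool) (s : Fin (n + 2)) : ℝ :=
  ∑' t : ℕ, γ ^ t * chainReward n γ (chainTraj n π s t) (π (chainTraj n π s t))

/-! Splitting off the first term of the discounted series gives the Bellman equation
`v(s) = r(s, π s) + γ v(f(s, π s))`, which determines the values state by state.
Since `s_{n+1}` is absorbing with zero reward, `v(s_{n+1}) = 0`, so every state playing `d` has
value `0`; `s_n` playing `u` satisfies `v = (1 - γ) + γ v`, i.e. `v = 1`; and each further state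
playing `u` has value `γ` times that of its successor. -/

section ChainMDP

variable {n : ℕ} {γ : ℝ}

theorem chainStep_false (s : Fin (n + 2)) : chainStep n s false = Fin.last (n + 1) := rfl

theorem chainStep_last (a : Bool) : chainStep n (Fin.last (n + 1)) a = Fin.last (n + 1) := by
  cases a
  · rfl
  · simp [chainStep]

theorem chainStep_true_of_lt {s : Fin (n + 2)} (hs : s.val < n) :
    (chainStep n s true).val = s.val + 1 := by
  simp [chainStep, hs]

theorem chainStep_true_of_eq {s : Fin (n + 2)} (hs : s.val = n) : chainStep n s true = s := by
  simp [chainStep, hs]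

theorem chainReward_false (s : Fin (n + 2)) : chainReward n γ s false = 0 := by
  simp [chainReward]

theorem chainReward_last (a : Bool) : chainReward n γ (Fin.last (n + 1)) a = 0 := by
  simp [chainReward]

theorem chainTraj_succ' (π : Fin (n + 2) → Bool) (s : Fin (n + 2)) (k : ℕ) :
    chainTraj n π s (k + 1) = chainTraj n π (chainStep n s (π s)) k := by
  induction k with
  | zero => rfl
  | succ k ih => rw [chainTraj, ih, chainTraj]

theorem abs_chainReward_le (s : Fin (n + 2)) (a : Bool) : |chainReward n γ s a| ≤ |1 - γ| := by
  unfold chainReward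
  split_ifs <;> simp

theorem summable_chainValue (hγ : |γ| < 1) (π : Fin (n + 2) → Bool) (s : Fin (n + 2)) :
    Summable fun t => γ ^ t * chainReward n γ (chainTraj n π s t) (π (chainTraj n π s t)) := by
  refine Summable.of_norm_bounded ((summable_geometric_of_lt_one (abs_nonneg γ) hγ).mul_right
    |1 - γ|) fun t => ?_
  rw [Real.norm_eq_abs, abs_mul, abs_pow]
  exact mul_le_mul_of_nonneg_left (abs_chainReward_le _ _) (by positivity)

theorem chainValue_eq_reward_add (hγ : |γ| < 1) (π : Fin (n + 2) → Bool) (s : Fin (n + 2)) :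
    chainValue n γ π s =
      chainReward n γ s (π s) + γ * chainValue n γ π (chainStep n s (π s)) := by
  rw [chainValue, (summable_chainValue hγ π s).tsum_eq_zero_add, chainValue, ← tsum_mul_left]
  simp only [chainTraj_succ', pow_succ', mul_assoc, pow_zero, one_mul]
  rfl

theorem chainValue_last (hγ : |γ| < 1) (π : Fin (n + 2) → Bool) :
    chainValue n γ π (Fin.last (n + 1)) = 0 := by
  have hbellman := chainValue_eq_reward_add hγ π (Fin.last (n + 1))
  rw [chainStep_last, chainReward_last, zero_add] at hbellman
  have hγ_ne : γ ≠ 1 := by rintro rfl; norm_num at hγ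
  have : (1 - γ) * chainValue n γ π (Fin.last (n + 1)) = 0 := by linear_combination hbellman
  exact (mul_eq_zero.mp this).resolve_left (sub_ne_zero.mpr hγ_ne.symm)

theorem chainValue_of_false (hγ : |γ| < 1) {π : Fin (n + 2) → Bool} {s : Fin (n + 2)}
    (hs : π s = false) : chainValue n γ π s = 0 := by
  rw [chainValue_eq_reward_add hγ, hs, chainReward_false, chainStep_false, chainValue_last hγ,
    zero_add, mul_zero]

theorem chainValue_of_true_of_val_eq (hγ : |γ| < 1) {π : Fin (n + 2) → Bool} {s : Fin (n + 2)}
    (hs : π s = true) (hsn : s.val = n) : chainValue n γ π s = 1 := by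
  have hbellman := chainValue_eq_reward_add hγ π s
  have hreward : chainReward n γ s true = 1 - γ := by simp [chainReward, hsn]
  rw [hs, chainStep_true_of_eq hsn, hreward] at hbellman
  have hγ_ne : γ ≠ 1 := by rintro rfl; norm_num at hγ
  have : (1 - γ) * (chainValue n γ π s - 1) = 0 := by linear_combination hbellman
  linarith [(mul_eq_zero.mp this).resolve_left (sub_ne_zero.mpr hγ_ne.symm)]

theorem chainValue_of_true_of_val_lt (hγ : |γ| < 1) {π : Fin (n + 2) → Bool} {s : Fin (n + 2)}
    (hs : π s = true) (hsn : s.val < n) :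
    chainValue n γ π s = γ * chainValue n γ π (chainStep n s true) := by
  have hreward : chainReward n γ s true = 0 := by simp [chainReward, hsn.ne]
  rw [chainValue_eq_reward_add hγ, hs, hreward, zero_add]

theorem chainValue_eq_pow_of_forall_true (hγ : |γ| < 1) {π : Fin (n + 2) → Bool}
    {i : Fin (n + 2)} (hin : i.val ≤ n)
    (hπ : ∀ j : Fin (n + 2), i.val ≤ j.val → j.val ≤ n → π j = true) :
    chainValue n γ π i = γ ^ (n - i.val) := by
  obtain ⟨d, hd⟩ : ∃ d, n - i.val = d := ⟨_, rfl⟩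
  induction d generalizing i with
  | zero =>
    rw [hd, pow_zero]
    exact chainValue_of_true_of_val_eq hγ (hπ i le_rfl hin) (by omega)
  | succ d ih =>
    have hlt : i.val < n := by omega
    have hnext := chainStep_true_of_lt hlt
    rw [chainValue_of_true_of_val_lt hγ (hπ i le_rfl hin) hlt,
      ih (by omega) (fun j hj hjn => hπ j (by omega) hjn) (by omega), hnext, hd, pow_succ',
      show n - (i.val + 1) = d by omega]

end ChainMDP

theorem chain_policy_value_general (n : ℕ) (γ : ℝ) (hγ₀ : 0 < γ) (hγ₁ : γ < 1)
    (t : ℕ)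
    (π : Fin (n + 2) → Bool) (hπ : ∀ s, π s = decide (n + 1 - t ≤ s.val ∧ s.val ≤ n)) :
    (∀ i : Fin (n + 2), n + 1 - t ≤ i.val → i.val ≤ n →
      chainValue n γ π i = γ ^ (n - i.val)) ∧
    (∀ s : Fin (n + 2), ¬(n + 1 - t ≤ s.val ∧ s.val ≤ n) → chainValue n γ π s = 0) := by
  have hγ : |γ| < 1 := abs_lt.mpr ⟨by linarith, hγ₁⟩
  refine ⟨fun i hlo hhi => chainValue_eq_pow_of_forall_true hγ hhi fun j hij hjn => ?_,
    fun s hs => chainValue_of_false hγ ?_⟩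
  · rw [hπ]
    exact decide_eq_true ⟨hlo.trans hij, hjn⟩
  · rw [hπ]
    exact decide_eq_false hs

/-- Value of the policy `π_t` that plays `u` exactly on the states `s_i` with
`n+1-t ≤ i ≤ n`: it equals `γ^(n-i)` on those states and `0` elsewhere. -/
theorem chain_policy_value (n : ℕ) (γ : ℝ) (hγ₀ : 0 < γ) (hγ₁ : γ < 1)
    (t : ℕ) (ht : t ≤ n)
    (π : Fin (n + 2) → Bool) (hπ : ∀ s, π s = decide (n + 1 - t ≤ s.val ∧ s.val ≤ n)) :
    (∀ i : Fin (n + 2), n + 1 - t ≤ i.val → i.val ≤ n →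
      chainValue n γ π i = γ ^ (n - i.val)) ∧
    (∀ s : Fin (n + 2), ¬(n + 1 - t ≤ s.val ∧ s.val ≤ n) → chainValue n γ π s = 0) :=
  chain_policy_value_general n γ hγ₀ hγ₁ t π hπ
end
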